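/- The Gibbs distribution π^η with the groupput throughput T_w = ν_w·c_w satisfies detailed balance with respect to the EconCast-NC transition rates: for all w, w' ∈ W, π_w^η · r(w,w') = π_{w'}^η · r(w',w). -/

import Mathlib

open Finset

inductive NodeState : Type
  | s | l | x
deriving DecidableEq

instance instFintypeNodeState : Fintype NodeState :=
  ⟨{NodeState.s, NodeState.l, NodeState.x}, by intro a; cases a <;> simp⟩

abbrev NetState (N : ℕ) := Fin N → NodeState

/-- Number of nodes in transmit state. -/
def numTransmit {N : ℕ} (w : NetState N) : ℕ :=
  (univ.filter fun i => w i = NodeState.x).card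

/-- Number of nodes in listen state (`c_w`). -/
def numListen {N : ℕ} (w : NetState N) : ℕ :=
  (univ.filter fun i => w i = NodeState.l).card

/-- The (finite) set `W` of collision-free network states. -/
def CF (N : ℕ) : Finset (NetState N) :=
  univ.filter fun w => numTransmit w ≤ 1

/-- Indicator `ν_w` that exactly one node is transmitting. -/
def nu {N : ℕ} (w : NetState N) : ℝ := if numTransmit w = 1 then 1 else 0

/-- Groupput throughput `T_w = ν_w · c_w` of a state. -/
noncomputable def Tg {N : ℕ} (w : NetState N) : ℝ := nu w * (numListen w : ℝ)

/-- The penalty `P_w = Σ_{i: w_i=l} η_i L_i + Σ_{i: w_i=x} η_i X_i`. -/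
noncomputable def penalty {N : ℕ} (η L X : Fin N → ℝ) (w : NetState N) : ℝ :=
  ∑ i ∈ univ.filter (fun i => w i = NodeState.l), η i * L i
  + ∑ i ∈ univ.filter (fun i => w i = NodeState.x), η i * X i

/-- Normalizing constant `Z^η`. -/
noncomputable def Zfun (N : ℕ) (σ : ℝ) (η L X : Fin N → ℝ) (T : NetState N → ℝ) : ℝ :=
  ∑ w ∈ CF N, Real.exp ((T w - penalty η L X w) / σ)

/-- The Gibbs distribution `π^η_w = exp((T_w − P_w)/σ)/Z^η`. -/
noncomputable def gibbs (N : ℕ) (σ : ℝ) (η L X : Fin N → ℝ) (T : NetState N → ℝ)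
    (w : NetState N) : ℝ :=
  Real.exp ((T w - penalty η L X w) / σ) / Zfun N σ η L X T

/-- EconCast-NC (groupput mode) transition rates: from a state with no
transmitter, a sleeping node wakes to listen at rate `exp(−η_i L_i/σ)`, a
listening node goes to sleep at rate `1`, and a listening node `i` starts
transmitting at rate `exp(η_i(L_i − X_i)/σ + c'/σ)` where `c'` is the number of
listeners other than `i`; a transmitting node moves back to listen at rate `1`;
all other rates vanish. -/
noncomputable def rateNC (N : ℕ) (σ : ℝ) (η L X : Fin N → ℝ) (w w' : NetState N) : ℝ :=
  (∑ i : Fin N, if w i = NodeState.s ∧ numTransmit w = 0 ∧ w' = Function.update w i NodeState.l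
      then Real.exp (-(η i * L i) / σ) else 0)
  + (∑ i : Fin N, if w i = NodeState.l ∧ numTransmit w = 0 ∧ w' = Function.update w i NodeState.s
      then 1 else 0)
  + (∑ i : Fin N, if w i = NodeState.l ∧ numTransmit w = 0 ∧ w' = Function.update w i NodeState.x
      then Real.exp (η i * (L i - X i) / σ
        + ((univ.filter fun j => j ≠ i ∧ w j = NodeState.l).card : ℝ) / σ) else 0)
  + (∑ i : Fin N, if w i = NodeState.x ∧ w' = Function.update w i NodeState.l
      then 1 else 0)

/-!
Every nonzero rate moves a single node and the reverse move has rate `1`, so detailed balance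
reduces to checking, move by move, that the forward rate equals the ratio `exp ((ΔT - ΔP) / σ)`
of the Gibbs weights. A wake-up `s → l` of node `i` raises `P` by `η i * L i`; a start of
transmission `l → x` raises `P` by `η i * (X i - L i)` and raises `T` from `0` to the number of
the other listeners.
-/

open Function

lemma filter_update_eq_ite {α β : Type*} [Fintype α] [DecidableEq α] [DecidableEq β]
    (f : α → β) (i : α) (v a : β) :
    (univ.filter fun j => update f i v j = a) =
      if v = a then insert i (univ.filter fun j => f j = a)
      else (univ.filter fun j => f j = a).erase i := by
  split_ifs with h
  · subst h
    ext j
    by_cases hj : j = i <;> simp [update_apply, hj]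
  · ext j
    by_cases hj : j = i <;> simp [update_apply, hj, h]

lemma apply_eq_and_eq_update_comm {α β : Type*} [DecidableEq α] {f g : α → β} {i : α} {a b : β} :
    (f i = a ∧ g = update f i b) ↔ (g i = b ∧ f = update g i a) := by
  constructor <;>
  · rintro ⟨rfl, rfl⟩
    simp

variable {N : ℕ}

lemma numTransmit_update_of_ne_x (w : NetState N) (i : Fin N) {v : NodeState}
    (hw : w i ≠ NodeState.x) (hv : v ≠ NodeState.x) :
    numTransmit (update w i v) = numTransmit w := by
  rw [numTransmit, filter_update_eq_ite, if_neg hv, erase_eq_of_notMem (by simp [hw]),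
    numTransmit]

lemma numTransmit_update_x (w : NetState N) (i : Fin N) (hw : w i ≠ NodeState.x) :
    numTransmit (update w i NodeState.x) = numTransmit w + 1 := by
  rw [numTransmit, filter_update_eq_ite, if_pos rfl, card_insert_of_notMem (by simp [hw]),
    numTransmit]

lemma card_listen_update_x (w : NetState N) (i : Fin N) :
    numListen (update w i NodeState.x) =
      (univ.filter fun j => j ≠ i ∧ w j = NodeState.l).card := by
  rw [numListen, filter_update_eq_ite, if_neg (by simp)]
  congr 1
  ext j
  simp [and_comm]

lemma Tg_of_numTransmit_eq_zero {w : NetState N} (hw : numTransmit w = 0) : Tg w = 0 := by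
  simp [Tg, nu, hw]

lemma penalty_update_l (η L X : Fin N → ℝ) (w : NetState N) (i : Fin N)
    (hw : w i = NodeState.s) :
    penalty η L X (update w i NodeState.l) = penalty η L X w + η i * L i := by
  rw [penalty, penalty, filter_update_eq_ite, filter_update_eq_ite, if_pos rfl, if_neg (by simp),
    sum_insert (by simp [hw]), erase_eq_of_notMem (by simp [hw])]
  ring

lemma penalty_update_x (η L X : Fin N → ℝ) (w : NetState N) (i : Fin N)
    (hw : w i = NodeState.l) :
    penalty η L X (update w i NodeState.x) = penalty η L X w - η i * L i + η i * X i := by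
  have hi : i ∈ univ.filter fun j => w j = NodeState.l := by simp [hw]
  rw [penalty, penalty, filter_update_eq_ite, filter_update_eq_ite, if_neg (by simp), if_pos rfl,
    sum_insert (by simp [hw]), ← add_sum_erase _ _ hi]
  ring

section Rates

variable (σ : ℝ) (η L X : Fin N → ℝ)

noncomputable def groupputWeight (w : NetState N) : ℝ :=
  Real.exp ((Tg w - penalty η L X w) / σ)

lemma gibbs_eq_groupputWeight_div (w : NetState N) :
    gibbs N σ η L X Tg w = groupputWeight σ η L X w / Zfun N σ η L X Tg :=
  rfl

noncomputable def wakeRate (w w' : NetState N) (i : Fin N) : ℝ :=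
  if w i = NodeState.s ∧ numTransmit w = 0 ∧ w' = update w i NodeState.l
  then Real.exp (-(η i * L i) / σ) else 0

def sleepRate (w w' : NetState N) (i : Fin N) : ℝ :=
  if w i = NodeState.l ∧ numTransmit w = 0 ∧ w' = update w i NodeState.s then 1 else 0

noncomputable def transmitRate (w w' : NetState N) (i : Fin N) : ℝ :=
  if w i = NodeState.l ∧ numTransmit w = 0 ∧ w' = update w i NodeState.x
  then Real.exp (η i * (L i - X i) / σ
    + ((univ.filter fun j => j ≠ i ∧ w j = NodeState.l).card : ℝ) / σ) else 0

def stopRate (w w' : NetState N) (i : Fin N) : ℝ :=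
  if w i = NodeState.x ∧ w' = update w i NodeState.l then 1 else 0

noncomputable def nodeRate (w w' : NetState N) (i : Fin N) : ℝ :=
  wakeRate σ η L w w' i + sleepRate w w' i + transmitRate σ η L X w w' i + stopRate w w' i

lemma rateNC_eq_sum_nodeRate (w w' : NetState N) :
    rateNC N σ η L X w w' = ∑ i, nodeRate σ η L X w w' i := by
  simp only [nodeRate, sum_add_distrib]
  rfl

lemma wake_iff_sleep {w w' : NetState N} {i : Fin N} :
    (w i = NodeState.s ∧ numTransmit w = 0 ∧ w' = update w i NodeState.l) ↔
      (w' i = NodeState.l ∧ numTransmit w' = 0 ∧ w = update w' i NodeState.s) := by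
  constructor
  · rintro ⟨hs, h0, rfl⟩
    rw [numTransmit_update_of_ne_x w i (by simp [hs]) (by simp)]
    exact ⟨by simp, h0, by simp [← hs]⟩
  · rintro ⟨hl, h0, rfl⟩
    rw [numTransmit_update_of_ne_x w' i (by simp [hl]) (by simp)]
    exact ⟨by simp, h0, by simp [← hl]⟩

lemma transmit_iff_stop {w w' : NetState N} {i : Fin N} (hw' : numTransmit w' ≤ 1) :
    (w i = NodeState.l ∧ numTransmit w = 0 ∧ w' = update w i NodeState.x) ↔
      (w' i = NodeState.x ∧ w = update w' i NodeState.l) := by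
  constructor
  · rintro ⟨hl, -, h⟩
    exact apply_eq_and_eq_update_comm.1 ⟨hl, h⟩
  · intro h
    obtain ⟨hl, rfl⟩ := apply_eq_and_eq_update_comm.2 h
    refine ⟨hl, ?_, rfl⟩
    have := numTransmit_update_x w i (by simp [hl])
    omega

lemma groupputWeight_mul_wakeRate (w w' : NetState N) (i : Fin N) :
    groupputWeight σ η L X w * wakeRate σ η L w w' i =
      groupputWeight σ η L X w' * sleepRate w' w i := by
  unfold wakeRate sleepRate
  split_ifs with hfwd hrev hrev
  · obtain ⟨hs, h0, rfl⟩ := hfwd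
    rw [groupputWeight, groupputWeight, Tg_of_numTransmit_eq_zero h0,
      Tg_of_numTransmit_eq_zero hrev.2.1, penalty_update_l η L X w i hs, ← Real.exp_add, mul_one]
    congr 1
    ring
  · exact absurd (wake_iff_sleep.1 hfwd) hrev
  · exact absurd (wake_iff_sleep.2 hrev) hfwd
  · simp

lemma groupputWeight_mul_transmitRate (w w' : NetState N) (i : Fin N)
    (hw' : numTransmit w' ≤ 1) :
    groupputWeight σ η L X w * transmitRate σ η L X w w' i =
      groupputWeight σ η L X w' * stopRate w' w i := by
  unfold transmitRate stopRate
  split_ifs with hfwd hrev hrev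
  · obtain ⟨hl, h0, rfl⟩ := hfwd
    have hTg : Tg (update w i NodeState.x) =
        ((univ.filter fun j => j ≠ i ∧ w j = NodeState.l).card : ℝ) := by
      simp [Tg, nu, numTransmit_update_x w i (by simp [hl]), h0, card_listen_update_x]
    rw [groupputWeight, groupputWeight, Tg_of_numTransmit_eq_zero h0, hTg,
      penalty_update_x η L X w i hl, ← Real.exp_add, mul_one]
    congr 1
    ring
  · exact absurd ((transmit_iff_stop hw').1 hfwd) hrev
  · exact absurd ((transmit_iff_stop hw').2 hrev) hfwd
  · simp

lemma groupputWeight_mul_nodeRate_comm (w w' : NetState N) (i : Fin N)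
    (hw : numTransmit w ≤ 1) (hw' : numTransmit w' ≤ 1) :
    groupputWeight σ η L X w * nodeRate σ η L X w w' i =
      groupputWeight σ η L X w' * nodeRate σ η L X w' w i := by
  simp only [nodeRate, mul_add]
  rw [groupputWeight_mul_wakeRate, ← groupputWeight_mul_wakeRate σ η L X w' w,
    groupputWeight_mul_transmitRate σ η L X w w' i hw',
    ← groupputWeight_mul_transmitRate σ η L X w' w i hw]
  ring

end Rates

theorem gibbs_detailed_balance_econcastNC_groupput_general (N : ℕ)
    (σ : ℝ) (η L X : Fin N → ℝ) :
    ∀ w ∈ CF N, ∀ w' ∈ CF N,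
      gibbs N σ η L X Tg w * rateNC N σ η L X w w'
        = gibbs N σ η L X Tg w' * rateNC N σ η L X w' w := by
  intro w hw w' hw'
  rw [CF, mem_filter] at hw hw'
  rw [gibbs_eq_groupputWeight_div, gibbs_eq_groupputWeight_div, div_mul_eq_mul_div,
    div_mul_eq_mul_div, rateNC_eq_sum_nodeRate, rateNC_eq_sum_nodeRate, mul_sum, mul_sum]
  congr 1
  exact sum_congr rfl fun i _ => groupputWeight_mul_nodeRate_comm σ η L X w w' i hw.2 hw'.2

/-- The Gibbs distribution with groupput throughput satisfies
detailed balance w.r.t. the EconCast-NC transition rates. -/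
theorem gibbs_detailed_balance_econcastNC_groupput (N : ℕ) (hN : 2 ≤ N)
    (σ : ℝ) (hσ : 0 < σ) (η L X : Fin N → ℝ)
    (hη : ∀ i, 0 ≤ η i) (hL : ∀ i, 0 < L i) (hX : ∀ i, 0 < X i) :
    ∀ w ∈ CF N, ∀ w' ∈ CF N,
      gibbs N σ η L X Tg w * rateNC N σ η L X w w'
        = gibbs N σ η L X Tg w' * rateNC N σ η L X w' w :=
  gibbs_detailed_balance_econcastNC_groupput_general N σ η L X
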